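/- arXiv:2503.01427 — 2 statements merged into one kernel-verified Lean document; each statement's English description precedes it below -/
import Mathlib

section
/- If ρ₀ > 0 is continuous on the closure of Ω, c⁰ is smooth, and ρ¹ is a smooth solution of ρ¹ − δtΔρ¹ + δtχ∇·(ρ¹∇c⁰) = ρ₀ on a bounded domain Ω with Neumann boundary conditions, then ρ¹ > 0 on Ω. (If ρ¹ vanished at an interior minimum point x₀, then ∇ρ¹(x₀) = 0 and Δρ¹(x₀) ≥ 0, forcing ρ₀(x₀) ≤ 0, a contradiction.) -/
/-
If `ρ¹` vanished at some `x ∈ Ω`, then `x` would be an interior minimum of `ρ¹ ≥ 0`. There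
`∇ρ¹(x) = 0` and `Δρ¹(x) ≥ 0` (each pure second derivative is nonnegative at a minimum), and the
product rule `∇·(ρ¹ V) = ρ¹ ∇·V + ∇ρ¹ · V` kills the chemotaxis term, so the scheme would give
`ρ₀(x) = -δt Δρ¹(x) ≤ 0`.
-/

open MeasureTheory

noncomputable section

abbrev E2 : Type := EuclideanSpace ℝ (Fin 2)

def lap (f : E2 → ℝ) (x : E2) : ℝ :=
  ∑ i, fderiv ℝ (fun y => fderiv ℝ f y (EuclideanSpace.single i 1)) x (EuclideanSpace.single i 1)

def dvg (v : E2 → E2) (x : E2) : ℝ :=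
  ∑ i, fderiv ℝ (fun y => v y i) x (EuclideanSpace.single i 1)

open Filter Topology

theorem ContDiffAt.differentiableAt_fderiv_apply {𝕜 E F : Type*} [NontriviallyNormedField 𝕜]
    [NormedAddCommGroup E] [NormedSpace 𝕜 E] [NormedAddCommGroup F] [NormedSpace 𝕜 F]
    {f : E → F} {x : E} (hf : ContDiffAt 𝕜 2 f x) (v : E) :
    DifferentiableAt 𝕜 (fun y => fderiv 𝕜 f y v) x :=
  ((hf.fderiv_right (m := 1) (by norm_num)).differentiableAt (by simp)).clm_apply
    (differentiableAt_const v)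

theorem IsLocalMin.deriv_deriv_nonneg {f : ℝ → ℝ} {a : ℝ} (h : IsLocalMin f a)
    (hc : ContinuousAt f a) : 0 ≤ deriv (deriv f) a := by
  -- By the second-derivative test `a` would also be a local maximum, so `f` would be locally
  -- constant near `a`.
  by_contra! hneg
  have hmax : IsLocalMax f a := isLocalMax_of_deriv_deriv_neg hneg h.deriv_eq_zero hc
  have hconst : f =ᶠ[𝓝 a] fun _ => f a := by
    filter_upwards [h, hmax] with y hmin hmax using le_antisymm hmax hmin
  have hderiv_const : deriv f =ᶠ[𝓝 a] fun _ => 0 := by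
    simpa using hconst.deriv
  simp [hderiv_const.deriv_eq] at hneg

theorem IsLocalMin.fderiv_fderiv_apply_nonneg {E : Type*} [NormedAddCommGroup E]
    [NormedSpace ℝ E] {f : E → ℝ} {x : E} (h : IsLocalMin f x) (hf : ContDiffAt ℝ 2 f x)
    (v : E) : 0 ≤ fderiv ℝ (fun y => fderiv ℝ f y v) x v := by
  set line : ℝ → E := fun t => x + t • v
  have hline : ∀ t, HasDerivAt line v t := fun t => by
    simpa [line] using ((hasDerivAt_id t).smul_const v).const_add x
  have hline0 : line 0 = x := by simp [line]
  have hline_tendsto : Tendsto line (𝓝 0) (𝓝 x) := hline0 ▸ (hline 0).continuousAt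
  have hderiv : deriv (f ∘ line) =ᶠ[𝓝 0] fun t => fderiv ℝ f (line t) v := by
    filter_upwards [hline_tendsto.eventually (hf.eventually (by simp))] with t ht
    exact ((ht.differentiableAt (by simp)).hasFDerivAt.comp_hasDerivAt t (hline t)).deriv
  have hsecond : HasDerivAt (fun t => fderiv ℝ f (line t) v)
      (fderiv ℝ (fun y => fderiv ℝ f y v) x v) 0 := by
    have hd : DifferentiableAt ℝ (fun y => fderiv ℝ f y v) (line 0) := by
      simpa only [hline0] using hf.differentiableAt_fderiv_apply v
    simpa only [hline0, Function.comp_def] using hd.hasFDerivAt.comp_hasDerivAt 0 (hline 0)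
  rw [← hsecond.deriv, ← hderiv.deriv_eq]
  exact IsLocalMin.deriv_deriv_nonneg ((hline0 ▸ h).comp_continuous (hline 0).continuousAt)
    (hf.continuousAt.comp_of_eq (hline 0).continuousAt hline0)

theorem EuclideanSpace.gradient_apply {ι : Type*} [Fintype ι] [DecidableEq ι]
    (f : EuclideanSpace ℝ ι → ℝ) (y : EuclideanSpace ℝ ι) (i : ι) :
    gradient f y i = fderiv ℝ f y (EuclideanSpace.single i 1) := by
  rw [← inner_gradient_left, EuclideanSpace.inner_single_right]
  simp

theorem ContDiffAt.differentiableAt_gradient {ι : Type*} [Fintype ι] [DecidableEq ι]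
    {f : EuclideanSpace ℝ ι → ℝ} {x : EuclideanSpace ℝ ι} (hf : ContDiffAt ℝ 2 f x) :
    DifferentiableAt ℝ (gradient f) x :=
  (differentiableAt_piLp 2).2 fun i => by
    simpa only [EuclideanSpace.gradient_apply] using hf.differentiableAt_fderiv_apply _

theorem dvg_smul {f : E2 → ℝ} {V : E2 → E2} {x : E2} (hf : DifferentiableAt ℝ f x)
    (hV : DifferentiableAt ℝ V x) :
    dvg (fun y => f y • V y) x = f x * dvg V x + fderiv ℝ f x (V x) := by
  have hexpand : V x = ∑ i, V x i • EuclideanSpace.single i (1 : ℝ) := by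
    simpa using ((EuclideanSpace.basisFun (Fin 2) ℝ).sum_repr (V x)).symm
  have hcomp (i : Fin 2) : fderiv ℝ (fun y => f y * V y i) x =
      f x • fderiv ℝ (fun y => V y i) x + V x i • fderiv ℝ f x :=
    fderiv_fun_mul hf ((differentiableAt_piLp 2).1 hV i)
  rw [dvg, dvg, Finset.mul_sum, hexpand, map_sum, ← Finset.sum_add_distrib]
  refine Finset.sum_congr rfl fun i _ => ?_
  simp only [PiLp.smul_apply, smul_eq_mul, hcomp]
  simp

theorem IsLocalMin.lap_nonneg {f : E2 → ℝ} {x : E2} (h : IsLocalMin f x)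
    (hf : ContDiffAt ℝ 2 f x) : 0 ≤ lap f x :=
  Finset.sum_nonneg fun _ _ => h.fderiv_fderiv_apply_nonneg hf _

theorem discrete_strict_positivity_general
    (Ω : Set E2) (hΩopen : IsOpen Ω)
    (δt χ : ℝ) (hδt : 0 < δt)
    (ρ0 ρ1 c0 : E2 → ℝ)
    (hρ0pos : ∀ x ∈ closure Ω, 0 < ρ0 x)
    (hρ1 : ContDiff ℝ 2 ρ1) (hc0 : ContDiff ℝ 2 c0)
    (hscheme : ∀ x ∈ Ω,
      ρ1 x - δt * lap ρ1 x + δt * χ * dvg (fun y => ρ1 y • gradient c0 y) x = ρ0 x)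
    (hρ1_nonneg : ∀ x ∈ Ω, 0 ≤ ρ1 x) :
    ∀ x ∈ Ω, 0 < ρ1 x := by
  intro x hx
  refine (hρ1_nonneg x hx).lt_of_ne' fun hzero => ?_
  have hmin : IsLocalMin ρ1 x := by
    filter_upwards [hΩopen.mem_nhds hx] with y hy
    exact hzero ▸ hρ1_nonneg y hy
  have hdvg : dvg (fun y => ρ1 y • gradient c0 y) x = 0 := by
    rw [dvg_smul (hρ1.differentiable (by norm_num) x) hc0.contDiffAt.differentiableAt_gradient,
      hzero, hmin.fderiv_eq_zero]
    simp
  have hlap : 0 ≤ lap ρ1 x := hmin.lap_nonneg hρ1.contDiffAt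
  have hscheme_x := hscheme x hx
  rw [hzero, hdvg] at hscheme_x
  linarith [mul_nonneg hδt.le hlap, hρ0pos x (subset_closure hx)]

/-- Strict positivity of ρ¹ when ρ₀ > 0: if ρ¹ ≥ 0 solves
ρ¹ − δtΔρ¹ + δtχ∇·(ρ¹∇c⁰) = ρ₀ on a bounded domain Ω with ρ₀ > 0 continuous on
the closure of Ω, then ρ¹ > 0 on Ω. -/
theorem discrete_strict_positivity
    (Ω : Set E2) (hΩopen : IsOpen Ω) (hΩb : Bornology.IsBounded Ω)
    (δt χ : ℝ) (hδt : 0 < δt) (hχ : 0 < χ)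
    (ρ0 ρ1 c0 : E2 → ℝ)
    (hρ0cont : ContinuousOn ρ0 (closure Ω))
    (hρ0pos : ∀ x ∈ closure Ω, 0 < ρ0 x)
    (hρ1 : ContDiff ℝ 2 ρ1) (hc0 : ContDiff ℝ 2 c0)
    (hscheme : ∀ x ∈ Ω,
      ρ1 x - δt * lap ρ1 x + δt * χ * dvg (fun y => ρ1 y • gradient c0 y) x = ρ0 x)
    (hρ1_nonneg : ∀ x ∈ Ω, 0 ≤ ρ1 x) :
    ∀ x ∈ Ω, 0 < ρ1 x :=
  discrete_strict_positivity_general Ω hΩopen δt χ hδt ρ0 ρ1 c0 hρ0pos hρ1 hc0 hscheme hρ1_nonneg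

end
end

section
/- Fix α > 0, τ > 0, δt > 0 and 0 ≤ s < 1. For every integer k ≥ 1, sup_{r ≥ 0} r(α + r²)^{s/2} / (1 + (δt/τ)(α + r²))^k ≤ max{ 2^{s/2} α^{(1+s)/2}, ((1+s)τ / ((2k−1−s)δt))^{(1+s)/2} }. -/
/-!
With `R = α + r²`, `β = δt/τ` and `p = (1+s)/2`, the numerator is at most `R ^ p` because
`r ≤ √R`. Weighted AM–GM with weights `1 - p/k` and `p/k` gives `((k-p)/p · βR) ^ p ≤ (1 + βR) ^ k`,
so the symbol is bounded by `(p / ((k-p) β)) ^ p`, which is the second entry of the maximum; this is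
the exact supremum of `R ^ p / (1 + βR) ^ k` over `R > 0`, attained at `βR (k - p) = p`.
-/

open Real

lemma mul_rpow_le_rpow_half_add {r R t : ℝ} (hrR : r ^ 2 ≤ R) (ht : 0 ≤ t) :
    r * R ^ t ≤ R ^ (1 / 2 + t) := by
  have hR : 0 ≤ R := (sq_nonneg r).trans hrR
  have hr_sqrt : r ≤ R ^ (1 / 2 : ℝ) := by
    rw [← sqrt_eq_rpow]
    exact le_sqrt_of_sq_le hrR
  rw [rpow_add' hR (by positivity)]
  exact mul_le_mul_of_nonneg_right hr_sqrt (rpow_nonneg hR t)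

lemma rpow_le_one_add_rpow {x p K : ℝ} (hx : 0 ≤ x) (hp : 0 < p) (hpK : p < K) :
    ((K - p) / p * x) ^ p ≤ (1 + x) ^ K := by
  have hK : 0 < K := hp.trans hpK
  have hKp : 0 < K - p := sub_pos.2 hpK
  have hcx : 0 ≤ (K - p) / p * x := by positivity
  have hamgm := geom_mean_le_arith_mean2_weighted (p₁ := 1) (by positivity)
    (by positivity) zero_le_one hcx (show (K - p) / K + p / K = 1 by field_simp; ring)
  have hsum : (K - p) / K * 1 + p / K * ((K - p) / p * x) ≤ 1 + x := by
    have hw : (K - p) / K * 1 + p / K * ((K - p) / p * x) = (K - p) / K * (1 + x) := by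
      field_simp
    rw [hw]
    exact mul_le_of_le_one_left (by linarith) ((div_le_one hK).2 (by linarith))
  rw [one_rpow, one_mul] at hamgm
  calc ((K - p) / p * x) ^ p = (((K - p) / p * x) ^ (p / K)) ^ K := by
        rw [← rpow_mul hcx, div_mul_cancel₀ p hK.ne']
    _ ≤ (1 + x) ^ K := rpow_le_rpow (rpow_nonneg hcx _) (hamgm.trans hsum) hK.le

lemma rpow_div_one_add_mul_rpow_le {R β p K : ℝ} (hR : 0 ≤ R) (hβ : 0 < β) (hp : 0 < p)
    (hpK : p < K) : R ^ p / (1 + β * R) ^ K ≤ (p / ((K - p) * β)) ^ p := by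
  have hKp : 0 < K - p := sub_pos.2 hpK
  have hsplit : R ^ p = (p / ((K - p) * β)) ^ p * ((K - p) / p * (β * R)) ^ p := by
    rw [← mul_rpow (by positivity) (by positivity)]
    congr 1
    field_simp
  rw [div_le_iff₀ (by positivity), hsplit]
  exact mul_le_mul_of_nonneg_left (rpow_le_one_add_rpow (by positivity) hp hpK) (by positivity)

/-- Symbol bound for ∇A^{s/2}(I + (δt/τ)A)^{−k} with A = −Δ + αI:
for every r ≥ 0 and integer k ≥ 1,
r(α + r²)^{s/2}/(1 + (δt/τ)(α + r²))^k
  ≤ max{2^{s/2} α^{(1+s)/2}, ((1+s)τ/((2k−1−s)δt))^{(1+s)/2}}. -/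
theorem symbol_bound
    (α τ δt s : ℝ) (hα : 0 < α) (hτ : 0 < τ) (hδt : 0 < δt)
    (hs0 : 0 ≤ s) (hs1 : s < 1) (k : ℕ) (hk : 1 ≤ k) :
    ∀ r : ℝ, 0 ≤ r →
      r * (α + r^2) ^ (s/2) / (1 + (δt/τ) * (α + r^2))^k
        ≤ max (2 ^ (s/2) * α ^ ((1+s)/2))
            (((1+s) * τ / ((2*(k:ℝ) - 1 - s) * δt)) ^ ((1+s)/2)) := by
  intro r _
  have hk' : (1 : ℝ) ≤ k := by exact_mod_cast hk
  have hnum : r * (α + r ^ 2) ^ (s / 2) ≤ (α + r ^ 2) ^ ((1 + s) / 2) := by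
    convert mul_rpow_le_rpow_half_add (le_add_of_nonneg_left hα.le) (by linarith : 0 ≤ s / 2)
      using 2
    ring
  refine le_max_of_le_right ?_
  calc r * (α + r ^ 2) ^ (s / 2) / (1 + δt / τ * (α + r ^ 2)) ^ k
      ≤ (α + r ^ 2) ^ ((1 + s) / 2) / (1 + δt / τ * (α + r ^ 2)) ^ (k : ℝ) := by
        rw [rpow_natCast]
        gcongr
    _ ≤ ((1 + s) / 2 / ((k - (1 + s) / 2) * (δt / τ))) ^ ((1 + s) / 2) :=
        rpow_div_one_add_mul_rpow_le (by positivity) (by positivity) (by linarith) (by linarith)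
    _ = ((1 + s) * τ / ((2 * k - 1 - s) * δt)) ^ ((1 + s) / 2) := by
        congr 1
        have h2k : 0 < 2 * (k : ℝ) - 1 - s := by linarith
        rw [show (k : ℝ) - (1 + s) / 2 = (2 * k - 1 - s) / 2 by ring]
        field_simp
end
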